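/- Let n ≥ 1 and let a, b be integers with 0 < a < 2b. Then for every f ∈ ℤ₂[ξ₁,…,ξₙ], the polynomial Jq^a(Jq^b(f)) − Σ_{j=0}^{⌊a/2⌋} C(b−j−1, a−2j) · Jq^{a+b−j}(Jq^j(f)) has all its coefficients in 2ℤ₂ (here C(·,·) are integer binomial coefficients and Jq⁰ = id); i.e., the Adem relation elements R(a,b) map ℤ₂[ξ₁,…,ξₙ] into 2·ℤ₂[ξ₁,…,ξₙ]. -/

import Mathlib

/-!
Over a ring of characteristic `2` the Adem relation holds on the nose, and `Jq` commutes with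
the reduction `ℤ₂ → 𝔽₂`, whose kernel is `2ℤ₂`.

For the exact relation we follow Bullett and Macdonald. The iterated total square
`f ↦ Σ Jq^a (Jq^b f) s^a t^b` is a ring homomorphism, so it is pinned down by the images of the
`ξᵢ`, and in characteristic `2` these agree under the two substitutions `(s, t) = (q(1-q)u, u)`
and `(s, t) = ((1-q)u, q²u)`. Compare the coefficients of `u^(a+b)` and apply the functional
`h ↦ Res_{q=0} h(q) dq / (q(1-q))^(a+1)`, i.e. the coefficient of `q^a` in `h · (1-q)^-(a+1)`.
It sends `(q(1-q))^i` to the central binomial coefficient `C(2(a-i), a-i)` (to `0` if `i > a`),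
which is even unless `i = a`, so one side collapses to `Jq^a Jq^b f`; it sends
`(1-q)^(a+b-j) q^(2j)` to `±C(b-j-1, a-2j)` (to `0` if `2j > a`), which gives the other side.
-/

open MvPolynomial

/-- Total dyadic Steenrod square with a formal variable `t` recording the degree shift:
`ξᵢ ↦ ξᵢ + ξᵢ²·t`.  For a homogeneous `f` of degree `d`, the coefficient of `t^k`
is exactly the homogeneous component of degree `d + k` of the image of `f` under the
algebra endomorphism `ξᵢ ↦ ξᵢ + ξᵢ²`. -/
noncomputable def JqT (R : Type) [CommRing R] (n : ℕ) :
    MvPolynomial (Fin n) R →ₐ[R] Polynomial (MvPolynomial (Fin n) R) :=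
  aeval fun i : Fin n => Polynomial.C (X i) + Polynomial.C (X i ^ 2) * Polynomial.X

/-- The `k`-th (dyadic, for `R = ℤ_[2]`) Steenrod square `Jq^k`, as an `R`-linear
endomorphism of `R[ξ₁,…,ξₙ]`: it sends a homogeneous polynomial of degree `d` to the
homogeneous component of degree `d + k` of its image under the algebra endomorphism
`ξᵢ ↦ ξᵢ + ξᵢ²`. -/
noncomputable def Jq (R : Type) [CommRing R] (n : ℕ) (k : ℕ) :
    MvPolynomial (Fin n) R →ₗ[R] MvPolynomial (Fin n) R :=
  (LinearMap.restrictScalars R (Polynomial.lcoeff (MvPolynomial (Fin n) R) k)).comp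
    (JqT R n).toLinearMap

section PowerSeriesPairing

open PowerSeries

instance PowerSeries.instCharP {R : Type*} [Semiring R] (p : ℕ) [CharP R p] : CharP R⟦X⟧ p :=
  charP_of_injective_ringHom (C_injective (R := R)) p

variable {P : Type*} [CommRing P]

theorem PowerSeries.coeff_one_add_X_pow (d e : ℕ) :
    PowerSeries.coeff e ((1 + PowerSeries.X : P⟦X⟧) ^ d) = d.choose e := by
  rw [show (1 + PowerSeries.X : P⟦X⟧) = ((1 + Polynomial.X : Polynomial P) : P⟦X⟧) by simp,
    ← Polynomial.coe_pow, Polynomial.coeff_coe, Polynomial.coeff_one_add_X_pow]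

noncomputable def ademPairing (a : ℕ) : P⟦X⟧ →ₗ[P] P :=
  (PowerSeries.coeff a).comp (LinearMap.mulRight P (invOneSubPow P (a + 1)).val)

theorem ademPairing_apply (a : ℕ) (h : P⟦X⟧) :
    ademPairing a h = PowerSeries.coeff a (h * (invOneSubPow P (a + 1)).val) := rfl

theorem ademPairing_X_pow_mul_of_lt {a i : ℕ} (hai : a < i) (h : P⟦X⟧) :
    ademPairing a (PowerSeries.X ^ i * h) = 0 := by
  rw [ademPairing_apply, mul_assoc, coeff_X_pow_mul', if_neg (by omega)]

theorem ademPairing_X_pow_mul_one_sub_X_pow_self {a i : ℕ} (hia : i ≤ a) :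
    ademPairing a (PowerSeries.X ^ i * (1 - PowerSeries.X) ^ i : P⟦X⟧) =
      (a - i).centralBinom := by
  have hsplit : a + 1 = (a - i + 1) + i := by omega
  rw [ademPairing_apply, hsplit, mul_assoc,
    one_sub_pow_mul_invOneSubPow_val_add_eq_invOneSubPow_val, coeff_X_pow_mul', if_pos hia,
    invOneSubPow_val_succ_eq_mk_add_choose, coeff_mk, Nat.centralBinom_eq_two_mul_choose, two_mul]

theorem ademPairing_X_pow_mul_one_sub_X_pow_add {a i : ℕ} (hia : i ≤ a) (d : ℕ) :
    ademPairing a (PowerSeries.X ^ i * (1 - PowerSeries.X) ^ (a + 1 + d) : P⟦X⟧) =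
      PowerSeries.coeff (a - i) ((1 - PowerSeries.X : P⟦X⟧) ^ d) := by
  rw [ademPairing_apply, add_comm (a + 1), mul_assoc,
    one_sub_pow_add_mul_invOneSubPow_val_eq_one_sub_pow, coeff_X_pow_mul', if_pos hia]

section CharTwo

open Finset

variable [CharP P 2]

theorem ademPairing_X_mul_one_sub_X_pow (a i : ℕ) :
    ademPairing a ((PowerSeries.X * (1 - PowerSeries.X)) ^ i : P⟦X⟧) =
      if i = a then 1 else 0 := by
  rw [mul_pow]
  rcases lt_trichotomy i a with hia | rfl | hai
  · rw [ademPairing_X_pow_mul_one_sub_X_pow_self hia.le, if_neg hia.ne,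
      CharP.cast_eq_zero_iff P 2]
    exact Nat.two_dvd_centralBinom_of_one_le (by omega)
  · simp [ademPairing_X_pow_mul_one_sub_X_pow_self]
  · rw [ademPairing_X_pow_mul_of_lt hai, if_neg hai.ne']

theorem ademPairing_one_sub_X_pow_mul_X_sq_pow {a b j : ℕ} (hab : a < 2 * b) (hj : 2 * j ≤ a) :
    ademPairing a ((1 - PowerSeries.X) ^ (a + b - j) * (PowerSeries.X ^ 2) ^ j : P⟦X⟧) =
      (b - j - 1).choose (a - 2 * j) := by
  rw [mul_comm, ← pow_mul, show a + b - j = a + 1 + (b - j - 1) by omega,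
    ademPairing_X_pow_mul_one_sub_X_pow_add hj, CharTwo.sub_eq_add, coeff_one_add_X_pow]

variable {M : Type*} [AddCommGroup M] [Module P M]

theorem sum_antidiagonal_ademPairing_X_mul_one_sub_X_pow_smul (a b : ℕ) (G : ℕ × ℕ → M) :
    ∑ x ∈ antidiagonal (a + b),
        ademPairing a ((PowerSeries.X * (1 - PowerSeries.X)) ^ x.1 : P⟦X⟧) • G x =
      G (a, b) := by
  rw [sum_eq_single_of_mem (a, b) (by simp)]
  · simp [ademPairing_X_mul_one_sub_X_pow]
  · rintro ⟨i, j⟩ hij hne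
    have hia : i ≠ a := fun h => hne (by simp_all)
    rw [ademPairing_X_mul_one_sub_X_pow, if_neg hia, zero_smul]

theorem sum_antidiagonal_ademPairing_one_sub_X_pow_mul_X_sq_pow_smul {a b : ℕ} (hab : a < 2 * b)
    (G : ℕ × ℕ → M) :
    ∑ x ∈ antidiagonal (a + b),
        ademPairing a ((1 - PowerSeries.X) ^ x.1 * (PowerSeries.X ^ 2) ^ x.2 : P⟦X⟧) • G x =
      ∑ j ∈ range (a / 2 + 1), ((b - j - 1).choose (a - 2 * j) : P) • G (a + b - j, j) := by
  rw [← Finset.Nat.sum_antidiagonal_swap, Finset.Nat.sum_antidiagonal_eq_sum_range_succ_mk]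
  simp only [Prod.swap_prod_mk]
  rw [← sum_subset (range_subset_range.2 (show a / 2 + 1 ≤ (a + b).succ by omega))]
  · refine sum_congr rfl fun j hj => ?_
    rw [ademPairing_one_sub_X_pow_mul_X_sq_pow hab (by simp at hj; omega)]
  · intro j _ hj
    rw [mul_comm, ← pow_mul, ademPairing_X_pow_mul_of_lt (by simp at hj; omega), zero_smul]

end CharTwo

end PowerSeriesPairing

section Substitution

open Finset
open Polynomial (eval₂RingHom monomial)

variable {P B : Type*} [CommSemiring P] [CommSemiring B]

/-- The substitution `s ↦ w u`, `t ↦ w' u` on `P[s][t]`; the new variable `u` records the total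
degree in `s` and `t`. -/
noncomputable def scaledEval (φ : P →+* B) (w w' : B) :
    Polynomial (Polynomial P) →+* Polynomial B :=
  eval₂RingHom (eval₂RingHom (Polynomial.C.comp φ) (Polynomial.C w * Polynomial.X))
    (Polynomial.C w' * Polynomial.X)

theorem coeff_scaledEval (φ : P →+* B) (w w' : B) (p : Polynomial (Polynomial P)) (k : ℕ) :
    (scaledEval φ w w' p).coeff k =
      ∑ x ∈ antidiagonal k, φ ((p.coeff x.2).coeff x.1) * w ^ x.1 * w' ^ x.2 := by
  rw [scaledEval, Polynomial.coe_eval₂RingHom]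
  induction p using Polynomial.induction_on' with
  | add p p' hp hp' =>
    simp only [Polynomial.eval₂_add, Polynomial.coeff_add, hp, hp', ← sum_add_distrib, map_add,
      add_mul]
  | monomial e c =>
    induction c using Polynomial.induction_on' with
    | add c c' hc hc' =>
      simp only [map_add, Polynomial.eval₂_add, Polynomial.coeff_add, hc, hc',
        ← sum_add_distrib, add_mul]
    | monomial d c₀ =>
      have hmono : (monomial e (monomial d c₀)).eval₂
          (eval₂RingHom (Polynomial.C.comp φ) (Polynomial.C w * Polynomial.X))
          (Polynomial.C w' * Polynomial.X) =
            Polynomial.C (φ c₀ * w ^ d * w' ^ e) * Polynomial.X ^ (d + e) := by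
        simp only [Polynomial.eval₂_monomial, Polynomial.coe_eval₂RingHom, RingHom.coe_comp,
          Function.comp_apply, mul_pow, map_mul, map_pow]
        ring
      have hcoeff : ∀ x : ℕ × ℕ, ((monomial e (monomial d c₀)).coeff x.2).coeff x.1 =
          if (d, e) = x then c₀ else 0 := by
        rintro ⟨i, j⟩
        by_cases he : e = j <;> by_cases hd : d = i <;> simp [Polynomial.coeff_monomial, he, hd]
      simp only [hmono, Polynomial.coeff_C_mul_X_pow, hcoeff, apply_ite φ, map_zero, ite_mul,
        zero_mul, sum_ite_eq, HasAntidiagonal.mem_antidiagonal]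
      exact if_congr eq_comm rfl rfl

end Substitution

theorem bullett_macdonald_identity {A : Type*} [CommRing A] [CharP A 2] (x q v : A) :
    x + x ^ 2 * (q * (1 - q) * v) + (x + x ^ 2 * (q * (1 - q) * v)) ^ 2 * v =
      x + x ^ 2 * ((1 - q) * v) + (x + x ^ 2 * ((1 - q) * v)) ^ 2 * (q ^ 2 * v) := by
  linear_combination (x ^ 2 * v * (q - q ^ 2) + x ^ 3 * v ^ 2 * (q - 2 * q ^ 2 + q ^ 3)) *
    CharTwo.two_eq_zero (R := A)

section DoubleSquare

open Polynomial (eval₂RingHom)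

variable {R : Type} [CommRing R] {n : ℕ}

variable (R n) in
noncomputable def JqT₂ :
    MvPolynomial (Fin n) R →ₐ[R] Polynomial (Polynomial (MvPolynomial (Fin n) R)) :=
  (Polynomial.mapAlgHom (JqT R n)).comp (JqT R n)

theorem coeff_coeff_JqT₂ (f : MvPolynomial (Fin n) R) (a b : ℕ) :
    ((JqT₂ R n f).coeff b).coeff a = Jq R n a (Jq R n b f) := by
  simp [JqT₂, Jq]

theorem eval₂_JqT₂_bullett_macdonald {A : Type*} [CommRing A] [CharP A 2]
    (ι : MvPolynomial (Fin n) R →+* A) (q v : A) (f : MvPolynomial (Fin n) R) :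
    (JqT₂ R n f).eval₂ (eval₂RingHom ι (q * (1 - q) * v)) v =
      (JqT₂ R n f).eval₂ (eval₂RingHom ι ((1 - q) * v)) (q ^ 2 * v) := by
  let Θ : A → A → MvPolynomial (Fin n) R →+* A := fun S T =>
    (eval₂RingHom (eval₂RingHom ι S) T).comp (JqT₂ R n).toRingHom
  suffices Θ (q * (1 - q) * v) v = Θ ((1 - q) * v) (q ^ 2 * v) from DFunLike.congr_fun this f
  refine MvPolynomial.ringHom_ext (fun r => by simp [Θ, JqT₂, JqT]) (fun i => ?_)
  simpa [Θ, JqT₂, JqT, Polynomial.eval₂_pow, Polynomial.eval₂_mul] using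
    bullett_macdonald_identity (ι (X i)) q v

end DoubleSquare

section Adem

open Finset
open scoped PowerSeries

variable {R : Type} [CommRing R] {n : ℕ}

theorem ademPairing_coeff_scaledEval_JqT₂ (w w' : (MvPolynomial (Fin n) R)⟦X⟧) (a k : ℕ)
    (f : MvPolynomial (Fin n) R) :
    ademPairing a ((scaledEval PowerSeries.C w w' (JqT₂ R n f)).coeff k) =
      ∑ x ∈ antidiagonal k,
        ademPairing a (w ^ x.1 * w' ^ x.2) • Jq R n x.1 (Jq R n x.2 f) := by
  rw [coeff_scaledEval, map_sum]
  refine sum_congr rfl fun x _ => ?_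
  rw [coeff_coeff_JqT₂, mul_assoc, ← PowerSeries.smul_eq_C_mul, map_smul, smul_eq_mul, mul_comm,
    smul_eq_mul]

theorem Jq_adem_relation [CharP R 2] {a b : ℕ} (hab : a < 2 * b) (f : MvPolynomial (Fin n) R) :
    Jq R n a (Jq R n b f) = ∑ j ∈ range (a / 2 + 1),
      ((b - j - 1).choose (a - 2 * j) : R) • Jq R n (a + b - j) (Jq R n j f) := by
  have hBM : scaledEval PowerSeries.C (PowerSeries.X * (1 - PowerSeries.X)) 1 (JqT₂ R n f) =
      scaledEval PowerSeries.C (1 - PowerSeries.X) (PowerSeries.X ^ 2) (JqT₂ R n f) := by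
    simpa [scaledEval] using eval₂_JqT₂_bullett_macdonald (Polynomial.C.comp PowerSeries.C)
      (Polynomial.C PowerSeries.X) Polynomial.X f
  have key := congrArg (fun p => ademPairing a (p.coeff (a + b))) hBM
  simp only [ademPairing_coeff_scaledEval_JqT₂, one_pow, mul_one] at key
  rw [sum_antidiagonal_ademPairing_X_mul_one_sub_X_pow_smul,
    sum_antidiagonal_ademPairing_one_sub_X_pow_mul_X_sq_pow_smul hab] at key
  simpa only [Nat.cast_smul_eq_nsmul] using key

theorem JqT_map {S : Type} [CommRing S] (ψ : R →+* S) (f : MvPolynomial (Fin n) R) :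
    JqT S n (MvPolynomial.map ψ f) = (JqT R n f).map (MvPolynomial.map ψ) := by
  suffices ((JqT S n).toRingHom.comp (MvPolynomial.map ψ)) =
      (Polynomial.mapRingHom (MvPolynomial.map ψ)).comp (JqT R n).toRingHom from
    DFunLike.congr_fun this f
  refine MvPolynomial.ringHom_ext (fun r => ?_) (fun i => ?_) <;> simp [JqT]

theorem Jq_map {S : Type} [CommRing S] (ψ : R →+* S) (k : ℕ) (f : MvPolynomial (Fin n) R) :
    Jq S n k (MvPolynomial.map ψ f) = MvPolynomial.map ψ (Jq R n k f) := by
  simp [Jq, JqT_map]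

end Adem

theorem adem_relation_coeffs_even_general (n : ℕ) (a b : ℕ)
    (hab : a < 2 * b) (f : MvPolynomial (Fin n) ℤ_[2]) (m : Fin n →₀ ℕ) :
    (2 : ℤ_[2]) ∣ coeff m
      (Jq ℤ_[2] n a (Jq ℤ_[2] n b f) -
        ∑ j ∈ Finset.range (a / 2 + 1),
          ((b - j - 1).choose (a - 2 * j) : ℤ_[2]) •
            Jq ℤ_[2] n (a + b - j) (Jq ℤ_[2] n j f)) := by
  have two_dvd_of_toZMod_eq_zero : ∀ x : ℤ_[2], PadicInt.toZMod x = 0 → (2 : ℤ_[2]) ∣ x :=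
    fun x hx => by
      rwa [← RingHom.mem_ker, PadicInt.ker_toZMod, PadicInt.maximalIdeal_eq_span_p,
        Ideal.mem_span_singleton, Nat.cast_ofNat] at hx
  refine two_dvd_of_toZMod_eq_zero _ ?_
  rw [← coeff_map]
  simp only [map_sub, map_sum, Nat.cast_smul_eq_nsmul, map_nsmul, ← Jq_map]
  rw [Jq_adem_relation hab]
  simp only [Nat.cast_smul_eq_nsmul, sub_self, coeff_zero]

/-- Adem relation elements map into `2·ℤ₂[ξ₁,…,ξₙ]`: for `0 < a < 2b`, every
coefficient of `R(a,b)(f) = Jq^aJq^b(f) − Σ_{j=0}^{⌊a/2⌋} C(b−j−1, a−2j) Jq^{a+b−j}Jq^j(f)`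
is divisible by `2` in `ℤ₂`. -/
theorem adem_relation_coeffs_even (n : ℕ) (hn : 1 ≤ n) (a b : ℕ)
    (ha : 0 < a) (hab : a < 2 * b) (f : MvPolynomial (Fin n) ℤ_[2]) (m : Fin n →₀ ℕ) :
    (2 : ℤ_[2]) ∣ coeff m
      (Jq ℤ_[2] n a (Jq ℤ_[2] n b f) -
        ∑ j ∈ Finset.range (a / 2 + 1),
          ((b - j - 1).choose (a - 2 * j) : ℤ_[2]) •
            Jq ℤ_[2] n (a + b - j) (Jq ℤ_[2] n j f)) :=
  adem_relation_coeffs_even_general n a b hab f m
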